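/- arXiv:1307.5154 — 2 statements merged into one kernel-verified Lean document; each statement's English description precedes it below -/
import Mathlib

section
/- Assume zero external field, that 𝚫 is positive definite (det 𝚫 > 0), and that the matrix 𝚫̂ := 𝚫^{−1} − 2𝛂^{−1} is positive definite, where 𝛂 = diag(α^{(s)})_{s∈𝒮}. Then the normalized second moment of the partition function is bounded uniformly in the size: there exists a constant C < ∞, independent of N, such that E[Z_N²] ≤ C (E[Z_N])² for every admissible N. -/
/-!
Averaging over the Gaussian couplings gives `E Z_N = 2^N exp (N (1, 𝚫 1) / 2)` and
`E Z_N² = exp (N (1, 𝚫 1)) ∑_{σ,τ} exp (N (R, 𝚫 R))`, where `R` is the overlap vector of `σ`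
and `τ`. Factor `𝚫 = BᵀB`. The Hubbard–Stratonovich identity
`exp (N |B R|²) = E_g exp (√(2N) (R, Bᵀ g))`, with `g` a standard Gaussian vector in `ℝ^S`,
decouples the sites, and summing over `σ, τ` with `cosh x ≤ exp (x² / 2)` bounds the sum by
`4^N E_g exp ((Bᵀ g, 𝛂⁻¹ Bᵀ g))`. Positive definiteness of `𝚫̂ = 𝚫⁻¹ - 2𝛂⁻¹` says exactly that
`(Bᵀ g, 𝛂⁻¹ Bᵀ g) < |g|² / 2` for `g ≠ 0`; by compactness of the unit sphere this improves to
`≤ b |g|² / 2` with `b < 1`, and then `E_g exp (b |g|² / 2)` is finite.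
-/

open MeasureTheory ProbabilityTheory Real Filter

noncomputable section

namespace MSSK

/-- The ±1 spin value attached to a Boolean. -/
def spin (b : Bool) : ℝ := if b then 1 else -1

variable {S : ℕ}

/-- The matrix 𝚫 with entries α_s α_p Δ²_{sp}. -/
def Dmat (α : Fin S → ℝ) (Δsq : Fin S → Fin S → ℝ) : Fin S → Fin S → ℝ :=
  fun s p => α s * α p * Δsq s p

/-- Bilinear form (x, M y) on ℝ^S. -/
def quadForm (M : Fin S → Fin S → ℝ) (x y : Fin S → ℝ) : ℝ :=
  ∑ s, ∑ p, x s * M s p * y p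

/-- Positive semi-definiteness of a matrix, expressed via the quadratic form. -/
def PosSemidefQ (M : Fin S → Fin S → ℝ) : Prop := ∀ x : Fin S → ℝ, 0 ≤ quadForm M x x

/-- Positive definiteness of a matrix, expressed via the quadratic form. -/
def PosDefQ (M : Fin S → Fin S → ℝ) : Prop :=
  ∀ x : Fin S → ℝ, x ≠ 0 → 0 < quadForm M x x

/-- Configuration space: one ±1 spin (coded as a Boolean) for each species `s`
and each site `i < Ns s`. -/
abbrev Conf (S : ℕ) (Ns : Fin S → ℕ) := ∀ s : Fin S, Fin (Ns s) → Bool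

/-- The multi-species SK Hamiltonian with disorder values `J`. -/
def hamiltonian (N : ℕ) (Ns : Fin S → ℕ) (J : Fin S → Fin S → ℕ → ℕ → ℝ)
    (σ : Conf S Ns) : ℝ :=
  -(1 / Real.sqrt N) * ∑ s : Fin S, ∑ p : Fin S, ∑ i : Fin (Ns s), ∑ j : Fin (Ns p),
      J s p i j * spin (σ s i) * spin (σ p j)

/-- External-field part of the energy: Σ_s h^(s) Σ_i σ_i^(s). -/
def fieldTerm (Ns : Fin S → ℕ) (h : Fin S → ℝ) (σ : Conf S Ns) : ℝ :=
  ∑ s : Fin S, h s * ∑ i : Fin (Ns s), spin (σ s i)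

/-- The random partition function Z_N (for a fixed disorder realization). -/
def partitionFunction (N : ℕ) (Ns : Fin S → ℕ) (h : Fin S → ℝ)
    (J : Fin S → Fin S → ℕ → ℕ → ℝ) : ℝ :=
  ∑ σ : Conf S Ns, Real.exp (fieldTerm Ns h σ - hamiltonian N Ns J σ)

/-- The disorder: an i.i.d.-indexed family of independent centered Gaussian couplings,
`J c s p i j` having variance `Δsq s p` (the extra index `c` allows several
independent copies of the disorder). -/
def IsDisorderFam {Ω C : Type} [MeasurableSpace Ω] (μ : Measure Ω)
    (Δsq : Fin S → Fin S → ℝ) (J : C → Fin S → Fin S → ℕ → ℕ → Ω → ℝ) : Prop :=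
  (∀ c s p i j, Measurable (J c s p i j)) ∧
  iIndepFun
    (fun k : C × (Fin S × Fin S) × ℕ × ℕ => J k.1 k.2.1.1 k.2.1.2 k.2.2.1 k.2.2.2) μ ∧
  ∀ c s p i j, μ.map (J c s p i j) = gaussianReal 0 (Δsq s p).toNNReal

/-- A single copy of the disorder. -/
def IsDisorder {Ω : Type} [MeasurableSpace Ω] (μ : Measure Ω)
    (Δsq : Fin S → Fin S → ℝ) (J : Fin S → Fin S → ℕ → ℕ → Ω → ℝ) : Prop :=
  IsDisorderFam μ Δsq (fun _ : Unit => J)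

/-- Size of the block of species `s` at total size `N` (equal to α_s N at admissible sizes). -/
def blockSize (α : Fin S → ℝ) (N : ℕ) (s : Fin S) : ℕ := ⌊α s * N⌋₊

/-- `N` is admissible when every `α_s N` is a positive integer. -/
def Admissible (α : Fin S → ℝ) (N : ℕ) : Prop :=
  ∀ s, 0 < blockSize α N s ∧ (blockSize α N s : ℝ) = α s * N

/-- The quenched pressure density p_N = N⁻¹ E log Z_N. -/
def pDensity {Ω : Type} [MeasurableSpace Ω] (μ : Measure Ω) (α : Fin S → ℝ)
    (h : Fin S → ℝ) (J : Fin S → Fin S → ℕ → ℕ → Ω → ℝ) (N : ℕ) : ℝ :=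
  (1 / (N : ℝ)) *
    ∫ ω, Real.log (partitionFunction N (blockSize α N) h (fun s p i j => J s p i j ω)) ∂μ

/-- Overlap vector of two configurations. -/
def overlap (Ns : Fin S → ℕ) (σ τ : Conf S Ns) : Fin S → ℝ :=
  fun s => (1 / (Ns s : ℝ)) * ∑ i : Fin (Ns s), spin (σ s i) * spin (τ s i)

/-- Magnetization vector of a configuration. -/
def mag (Ns : Fin S → ℕ) (τ : Conf S Ns) : Fin S → ℝ :=
  fun s => (1 / (Ns s : ℝ)) * ∑ i : Fin (Ns s), spin (τ s i)

/-- Restriction of a configuration to the first sub-block. -/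
def restrict1 (Ns Ns1 Ns2 : Fin S → ℕ) (hsum : ∀ s, Ns s = Ns1 s + Ns2 s)
    (σ : Conf S Ns) : Conf S Ns1 :=
  fun s i => σ s (Fin.cast (hsum s).symm (Fin.castAdd (Ns2 s) i))

/-- Restriction of a configuration to the second (last) sub-block. -/
def restrict2 (Ns Ns1 Ns2 : Fin S → ℕ) (hsum : ∀ s, Ns s = Ns1 s + Ns2 s)
    (σ : Conf S Ns) : Conf S Ns2 :=
  fun s i => σ s (Fin.cast (hsum s).symm (Fin.natAdd (Ns1 s) i))

/-- Gibbs weight associated to an energy function `H` (which already includes the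
minus sign convention: the weight is exp(field − H)). -/
def gibbs (Ns : Fin S → ℕ) (h : Fin S → ℝ) (H : Conf S Ns → ℝ) (σ : Conf S Ns) : ℝ :=
  Real.exp (fieldTerm Ns h σ - H σ) / ∑ τ : Conf S Ns, Real.exp (fieldTerm Ns h τ - H τ)

end MSSK

namespace MSSK

/-- The matrix 𝚫̂ = 𝚫⁻¹ − 2𝛂⁻¹, with 𝛂 = diag(α_s). -/
def Dhat {S : ℕ} (α : Fin S → ℝ) (Δsq : Fin S → Fin S → ℝ) : Fin S → Fin S → ℝ :=
  fun s p => (Matrix.of (Dmat α Δsq))⁻¹ s p - (if s = p then 2 / α s else 0)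

end MSSK

open scoped NNReal
open Matrix Metric Finset

section Gaussian

variable {ι Ω : Type*} [Fintype ι] {mΩ : MeasurableSpace Ω} {μ : Measure Ω}
  {X : ι → Ω → ℝ} {v : ι → ℝ≥0}

lemma mgf_sum_mul_of_iIndepFun_gaussianReal (hmeas : ∀ i, Measurable (X i))
    (hind : iIndepFun X μ) (hlaw : ∀ i, μ.map (X i) = gaussianReal 0 (v i)) (t : ι → ℝ) :
    mgf (fun ω ↦ ∑ i, t i * X i ω) μ 1 = exp (∑ i, v i * t i ^ 2 / 2) := by
  have hind' : iIndepFun (fun i ω ↦ t i * X i ω) μ :=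
    hind.comp (fun i x ↦ t i * x) fun i ↦ measurable_const_mul (t i)
  have hsum := hind'.mgf_sum (fun i ↦ (hmeas i).const_mul (t i)) Finset.univ (t := 1)
  rw [Finset.sum_fn] at hsum
  simp only [hsum, mgf_const_mul, mgf_gaussianReal (hlaw _), exp_sum]
  simp

lemma integrable_exp_sum_mul_of_iIndepFun_gaussianReal [IsProbabilityMeasure μ]
    (hmeas : ∀ i, Measurable (X i)) (hind : iIndepFun X μ)
    (hlaw : ∀ i, μ.map (X i) = gaussianReal 0 (v i)) (t : ι → ℝ) :
    Integrable (fun ω ↦ exp (∑ i, t i * X i ω)) μ := by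
  have hpos : 0 < mgf (fun ω ↦ ∑ i, t i * X i ω) μ 1 := by
    rw [mgf_sum_mul_of_iIndepFun_gaussianReal hmeas hind hlaw t]
    exact exp_pos _
  simpa only [one_mul] using mgf_pos_iff.mp hpos

lemma integral_exp_sum_mul_of_iIndepFun_gaussianReal (hmeas : ∀ i, Measurable (X i))
    (hind : iIndepFun X μ) (hlaw : ∀ i, μ.map (X i) = gaussianReal 0 (v i)) (t : ι → ℝ) :
    ∫ ω, exp (∑ i, t i * X i ω) ∂μ = exp (∑ i, v i * t i ^ 2 / 2) := by
  simpa [mgf] using mgf_sum_mul_of_iIndepFun_gaussianReal hmeas hind hlaw t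

lemma integrable_exp_mul_sq_gaussianReal {l : ℝ} (hl : l < 1 / 2) :
    Integrable (fun x ↦ exp (l * x ^ 2)) (gaussianReal 0 1) := by
  rw [gaussianReal_of_var_ne_zero _ one_ne_zero, integrable_withDensity_iff
    (measurable_gaussianPDF 0 1) (.of_forall fun _ ↦ gaussianPDF_lt_top)]
  have hpos : 0 < 1 / 2 - l := by linarith
  refine ((integrable_exp_neg_mul_sq hpos).const_mul (√(2 * π))⁻¹).congr (.of_forall fun x ↦ ?_)
  simp only [toReal_gaussianPDF, gaussianPDFReal, NNReal.coe_one, mul_one]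
  rw [mul_left_comm, ← exp_add]
  ring_nf

end Gaussian

section StdGaussianVector

variable {ι : Type*} [Fintype ι]

lemma integral_exp_dotProduct_pi_gaussianReal (a : ι → ℝ) :
    ∫ g, exp (a ⬝ᵥ g) ∂(Measure.pi fun _ : ι ↦ gaussianReal 0 1) = exp (a ⬝ᵥ a / 2) := by
  simpa [dotProduct, Finset.sum_div, sq] using
    integral_exp_sum_mul_of_iIndepFun_gaussianReal (v := fun _ ↦ 1)
      (fun i ↦ measurable_pi_apply i) (iIndepFun_pi (X := fun _ ↦ id) fun _ ↦ aemeasurable_id)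
      (fun i ↦ (measurePreserving_eval _ i).map_eq) a

lemma integrable_exp_dotProduct_pi_gaussianReal (a : ι → ℝ) :
    Integrable (fun g ↦ exp (a ⬝ᵥ g)) (Measure.pi fun _ : ι ↦ gaussianReal 0 1) :=
  integrable_exp_sum_mul_of_iIndepFun_gaussianReal (v := fun _ ↦ 1)
    (fun i ↦ measurable_pi_apply i) (iIndepFun_pi (X := fun _ ↦ id) fun _ ↦ aemeasurable_id)
    (fun i ↦ (measurePreserving_eval _ i).map_eq) a

lemma integral_exp_mul_dotProduct_self_pi_gaussianReal (l : ℝ) :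
    ∫ g, exp (l * (g ⬝ᵥ g)) ∂(Measure.pi fun _ : ι ↦ gaussianReal 0 1)
      = (∫ x, exp (l * x ^ 2) ∂gaussianReal 0 1) ^ Fintype.card ι := by
  simp only [dotProduct, mul_sum, exp_sum, ← sq]
  exact integral_fintype_prod_eq_pow fun x ↦ exp (l * x ^ 2)

lemma integrable_exp_mul_dotProduct_self_pi_gaussianReal {l : ℝ} (hl : l < 1 / 2) :
    Integrable (fun g ↦ exp (l * (g ⬝ᵥ g))) (Measure.pi fun _ : ι ↦ gaussianReal 0 1) := by
  simp only [dotProduct, mul_sum, exp_sum, ← sq]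
  exact Integrable.fintype_prod fun _ ↦ integrable_exp_mul_sq_gaussianReal hl

end StdGaussianVector

section Homogeneous

variable {E : Type*} [NormedAddCommGroup E] [NormedSpace ℝ E] [FiniteDimensional ℝ E]

lemma exists_lt_one_forall_le_mul_of_homogeneous {f q : E → ℝ} (hf : Continuous f)
    (hq : Continuous q) (hf_smul : ∀ (c : ℝ) x, f (c • x) = c ^ 2 * f x)
    (hq_smul : ∀ (c : ℝ) x, q (c • x) = c ^ 2 * q x) (hq_pos : ∀ x ≠ 0, 0 < q x)
    (hfq : ∀ x ≠ 0, f x < q x) :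
    ∃ b < 1, ∀ x, f x ≤ b * q x := by
  have hf0 : f 0 = 0 := by simpa using hf_smul 0 0
  rcases subsingleton_or_nontrivial E with _ | _
  · exact ⟨0, zero_lt_one, fun x ↦ by simp [Subsingleton.elim x 0, hf0]⟩
  have hsphere : ∀ u ∈ sphere (0 : E) 1, u ≠ 0 := fun u hu ↦ ne_of_mem_sphere hu one_ne_zero
  obtain ⟨u₀, hu₀, hmax⟩ := (isCompact_sphere (0 : E) 1).exists_isMaxOn
    (NormedSpace.sphere_nonempty.mpr zero_le_one)
    (hf.continuousOn.div hq.continuousOn fun u hu ↦ (hq_pos u (hsphere u hu)).ne')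
  refine ⟨f u₀ / q u₀, (div_lt_one (hq_pos _ (hsphere _ hu₀))).mpr (hfq _ (hsphere _ hu₀)),
    fun x ↦ ?_⟩
  rcases eq_or_ne x 0 with rfl | hx
  · simp [hf0, by simpa using hq_smul 0 0]
  have hu : ‖x‖⁻¹ • x ∈ sphere (0 : E) 1 := by simp [norm_smul, hx]
  have hfu : f (‖x‖⁻¹ • x) ≤ f u₀ / q u₀ * q (‖x‖⁻¹ • x) :=
    (div_le_iff₀ (hq_pos _ (hsphere _ hu))).mp (hmax hu)
  rw [hf_smul, hq_smul] at hfu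
  have hx2 : 0 < (‖x‖⁻¹) ^ 2 := by positivity
  nlinarith

end Homogeneous

section DotProduct

variable {n : Type*} [Fintype n]

lemma exists_lt_one_dotProduct_transpose_mulVec_le [DecidableEq n] {D P B : Matrix n n ℝ}
    (hB : IsUnit B) (hD : D = Bᵀ * B) (hP : ∀ x ≠ 0, x ⬝ᵥ (P *ᵥ x) < x ⬝ᵥ (D⁻¹ *ᵥ x)) :
    ∃ b < 1, ∀ g, (Bᵀ *ᵥ g) ⬝ᵥ (P *ᵥ (Bᵀ *ᵥ g)) ≤ b * (g ⬝ᵥ g) := by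
  have hBt : IsUnit Bᵀ := (isUnit_transpose B).mpr hB
  have hconj : B * D⁻¹ * Bᵀ = 1 := by
    rw [hD, Matrix.mul_inv_rev, ← Matrix.mul_assoc,
      Matrix.mul_nonsing_inv _ ((isUnit_iff_isUnit_det B).mp hB), Matrix.one_mul,
      Matrix.nonsing_inv_mul _ ((isUnit_iff_isUnit_det _).mp hBt)]
  refine exists_lt_one_forall_le_mul_of_homogeneous (by fun_prop) (by fun_prop)
    (fun c g ↦ by simp only [mulVec_smul, dotProduct_smul, smul_dotProduct, smul_eq_mul]; ring)
    (fun c g ↦ by simp only [dotProduct_smul, smul_dotProduct, smul_eq_mul]; ring)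
    (fun g hg ↦ ?_) (fun g hg ↦ ?_)
  · simpa using dotProduct_self_star_pos_iff.mpr hg
  · have hx : Bᵀ *ᵥ g ≠ 0 := fun h ↦ hg <| by
      have := congrArg ((Bᵀ)⁻¹ *ᵥ ·) h
      simpa [mulVec_mulVec, Matrix.nonsing_inv_mul _ ((isUnit_iff_isUnit_det _).mp hBt)] using this
    convert hP _ hx using 1
    rw [mulVec_mulVec]
    nth_rw 1 [mulVec_transpose]
    rw [← dotProduct_mulVec, mulVec_mulVec, ← Matrix.mul_assoc, hconj, one_mulVec]

lemma dotProduct_smul_transpose_mulVec (B : Matrix n n ℝ) (c : ℝ) (R g : n → ℝ) :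
    R ⬝ᵥ (c • (Bᵀ *ᵥ g)) = (c • (B *ᵥ R)) ⬝ᵥ g := by
  rw [smul_dotProduct, dotProduct_smul, mulVec_transpose, dotProduct_comm (B *ᵥ R),
    dotProduct_mulVec, dotProduct_comm]

lemma exp_mul_dotProduct_self_mulVec_eq_integral (B : Matrix n n ℝ) {t : ℝ} (ht : 0 ≤ t)
    (R : n → ℝ) :
    exp (t * ((B *ᵥ R) ⬝ᵥ (B *ᵥ R)))
      = ∫ g, exp (R ⬝ᵥ (√(2 * t) • (Bᵀ *ᵥ g))) ∂(Measure.pi fun _ : n ↦ gaussianReal 0 1) := by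
  simp_rw [dotProduct_smul_transpose_mulVec]
  rw [integral_exp_dotProduct_pi_gaussianReal, smul_dotProduct, dotProduct_smul, smul_eq_mul,
    smul_eq_mul, ← mul_assoc, mul_self_sqrt (by positivity)]
  ring_nf

end DotProduct

namespace MSSK

variable {S : ℕ}

lemma spin_mul_self (b : Bool) : spin b * spin b = 1 := by cases b <;> simp [spin]

lemma card_conf (n : Fin S → ℕ) : Fintype.card (Conf S n) = ∏ s, 2 ^ n s := by
  simp [Fintype.card_pi]

lemma sum_conf_prod_prod (n : Fin S → ℕ) (F : ∀ s, Fin (n s) → Bool → ℝ) :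
    ∑ τ : Conf S n, ∏ s, ∏ i, F s i (τ s i) = ∏ s, ∏ i, (F s i true + F s i false) := by
  classical
  simp_rw [← Fintype.sum_bool, Fintype.prod_sum]

lemma exp_mul_spin_add_le (c : ℝ) (b : Bool) :
    exp (c * (spin b * spin true)) + exp (c * (spin b * spin false)) ≤ 2 * exp (c ^ 2 / 2) := by
  have h := cosh_le_exp_half_sq c
  rw [cosh_eq] at h
  cases b <;> simp [spin] <;> linarith

lemma sum_exp_mul_spin_le (n : Fin S → ℕ) (c : Fin S → ℝ) (σ : Conf S n) :
    ∑ τ : Conf S n, exp (∑ s, c s * ∑ i, spin (σ s i) * spin (τ s i))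
      ≤ Fintype.card (Conf S n) * exp (∑ s, n s * c s ^ 2 / 2) := by
  calc ∑ τ : Conf S n, exp (∑ s, c s * ∑ i, spin (σ s i) * spin (τ s i))
      = ∏ s, ∏ i, (exp (c s * (spin (σ s i) * spin true))
          + exp (c s * (spin (σ s i) * spin false))) := by
        rw [← sum_conf_prod_prod n fun s i b ↦ exp (c s * (spin (σ s i) * spin b))]
        simp only [exp_sum, mul_sum]
    _ ≤ ∏ s, ∏ _i : Fin (n s), 2 * exp (c s ^ 2 / 2) :=
        prod_le_prod (fun _ _ ↦ by positivity)
          fun s _ ↦ prod_le_prod (fun _ _ ↦ by positivity) fun i _ ↦ exp_mul_spin_add_le _ _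
    _ = Fintype.card (Conf S n) * exp (∑ s, n s * c s ^ 2 / 2) := by
        simp only [prod_const, card_univ, Fintype.card_fin, mul_pow, prod_mul_distrib, card_conf,
          Nat.cast_prod, Nat.cast_pow, Nat.cast_ofNat, exp_sum, ← exp_nat_mul, mul_div_assoc]

lemma sum_exp_overlap_dotProduct_le (n : Fin S → ℕ) (hn : ∀ s, n s ≠ 0) (y : Fin S → ℝ) :
    ∑ q : Conf S n × Conf S n, exp (overlap n q.1 q.2 ⬝ᵥ y)
      ≤ Fintype.card (Conf S n) ^ 2 * exp (∑ s, y s ^ 2 / (2 * n s)) := by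
  have hc : ∀ s, n s * (y s / n s) ^ 2 / 2 = y s ^ 2 / (2 * n s) := fun s ↦ by
    field_simp [hn s]
  have hov : ∀ σ τ : Conf S n, overlap n σ τ ⬝ᵥ y
      = ∑ s, y s / n s * ∑ i, spin (σ s i) * spin (τ s i) := fun σ τ ↦
    sum_congr rfl fun s _ ↦ by simp only [overlap]; ring
  calc ∑ q : Conf S n × Conf S n, exp (overlap n q.1 q.2 ⬝ᵥ y)
      ≤ ∑ _σ : Conf S n, Fintype.card (Conf S n) * exp (∑ s, y s ^ 2 / (2 * n s)) := by
        rw [Fintype.sum_prod_type]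
        refine sum_le_sum fun σ _ ↦ ?_
        simpa only [hov, hc] using sum_exp_mul_spin_le n (fun s ↦ y s / n s) σ
    _ = Fintype.card (Conf S n) ^ 2 * exp (∑ s, y s ^ 2 / (2 * n s)) := by
        rw [sum_const, card_univ, nsmul_eq_mul, sq, mul_assoc]

/-- Indices of the couplings `J^{(sp)}_{ij}` with `i < Ns s`, `j < Ns p`: the only ones that
enter the Hamiltonian at block sizes `Ns`. -/
abbrev Bond (Ns : Fin S → ℕ) := Σ s : Fin S, Σ p : Fin S, Fin (Ns s) × Fin (Ns p)

variable {Ns : Fin S → ℕ}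

def Bond.index (b : Bond Ns) : Unit × (Fin S × Fin S) × ℕ × ℕ :=
  ((), (b.1, b.2.1), (b.2.2.1, b.2.2.2))

lemma Bond.index_injective : Function.Injective (Bond.index (Ns := Ns)) := by
  rintro ⟨s, p, i, j⟩ ⟨s', p', i', j'⟩ h
  simp only [Bond.index, Prod.mk.injEq, true_and] at h
  obtain ⟨⟨rfl, rfl⟩, hi, hj⟩ := h
  rw [Fin.val_inj] at hi hj
  rw [hi, hj]

def Bond.coupling (J : Fin S → Fin S → ℕ → ℕ → ℝ) (b : Bond Ns) : ℝ :=
  J b.1 b.2.1 b.2.2.1 b.2.2.2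

def Bond.variance (Δsq : Fin S → Fin S → ℝ) (b : Bond Ns) : ℝ := Δsq b.1 b.2.1

def bondSpin (N : ℕ) (σ : Conf S Ns) (b : Bond Ns) : ℝ :=
  spin (σ b.1 b.2.2.1) * spin (σ b.2.1 b.2.2.2) / √N

lemma partitionFunction_zero_eq (N : ℕ) (J : Fin S → Fin S → ℕ → ℕ → ℝ) :
    partitionFunction N Ns (fun _ ↦ 0) J
      = ∑ σ : Conf S Ns, exp (∑ b, bondSpin N σ b * b.coupling J) := by
  refine sum_congr rfl fun σ _ ↦ congrArg exp ?_
  simp only [fieldTerm, hamiltonian, zero_mul, sum_const_zero, zero_sub, neg_mul, neg_neg,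
    Fintype.sum_sigma, Fintype.sum_prod_type, mul_sum, sum_neg_distrib, bondSpin, Bond.coupling]
  exact sum_congr rfl fun _ _ ↦ sum_congr rfl fun _ _ ↦ sum_congr rfl fun _ _ ↦
    sum_congr rfl fun _ _ ↦ by ring

lemma sum_variance_mul_bondSpin {α : Fin S → ℝ} {N : ℕ} (hN : ∀ s, (Ns s : ℝ) = α s * N)
    (hNs : ∀ s, Ns s ≠ 0) (Δsq : Fin S → Fin S → ℝ) (σ τ : Conf S Ns) :
    ∑ b, b.variance Δsq * (bondSpin N σ b * bondSpin N τ b)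
      = N * quadForm (Dmat α Δsq) (overlap Ns σ τ) (overlap Ns σ τ) := by
  simp only [Fintype.sum_sigma, Fintype.sum_prod_type, quadForm, mul_sum]
  refine sum_congr rfl fun s _ ↦ sum_congr rfl fun p _ ↦ ?_
  have hN0 : (N : ℝ) ≠ 0 := fun h ↦ hNs s <| by
    have := hN s
    rw [h, mul_zero] at this
    exact_mod_cast this
  have hov : ∀ r, ∑ i, spin (σ r i) * spin (τ r i) = α r * N * overlap Ns σ τ r := fun r ↦ by
    rw [overlap, ← hN r]; field_simp [hNs r]
  calc ∑ i, ∑ j, Bond.variance Δsq ⟨s, p, i, j⟩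
          * (bondSpin N σ ⟨s, p, i, j⟩ * bondSpin N τ ⟨s, p, i, j⟩)
      = Δsq s p / N * ((∑ i, spin (σ s i) * spin (τ s i)) * ∑ j, spin (σ p j) * spin (τ p j)) := by
        rw [sum_mul_sum, mul_sum]
        simp only [mul_sum, Bond.variance, bondSpin, div_mul_div_comm,
          mul_self_sqrt (Nat.cast_nonneg N)]
        exact sum_congr rfl fun _ _ ↦ sum_congr rfl fun _ _ ↦ by ring
    _ = N * (overlap Ns σ τ s * Dmat α Δsq s p * overlap Ns σ τ p) := by
        rw [hov s, hov p, Dmat]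
        field_simp

lemma overlap_self (hNs : ∀ s, Ns s ≠ 0) (σ : Conf S Ns) : overlap Ns σ σ = 1 := by
  ext s
  simp [overlap, spin_mul_self, hNs s]

section Disorder

variable {Ω : Type} [MeasurableSpace Ω] {μ : Measure Ω} {Δsq : Fin S → Fin S → ℝ}
  {J : Fin S → Fin S → ℕ → ℕ → Ω → ℝ}

lemma IsDisorder.integral_exp_sum_bond (hΔnn : ∀ s p, 0 ≤ Δsq s p) (hJ : IsDisorder μ Δsq J)
    (t : Bond Ns → ℝ) :
    ∫ ω, exp (∑ b, t b * b.coupling fun s p i j ↦ J s p i j ω) ∂μ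
      = exp (∑ b, b.variance Δsq * t b ^ 2 / 2) := by
  simpa [Bond.variance, Bond.coupling, Bond.index, Real.coe_toNNReal _ (hΔnn _ _)] using
    integral_exp_sum_mul_of_iIndepFun_gaussianReal (fun _ ↦ hJ.1 () _ _ _ _)
      (hJ.2.1.precomp Bond.index_injective) (fun _ ↦ hJ.2.2 () _ _ _ _) t

lemma IsDisorder.integrable_exp_sum_bond [IsProbabilityMeasure μ] (hJ : IsDisorder μ Δsq J)
    (t : Bond Ns → ℝ) :
    Integrable (fun ω ↦ exp (∑ b, t b * b.coupling fun s p i j ↦ J s p i j ω)) μ :=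
  integrable_exp_sum_mul_of_iIndepFun_gaussianReal (fun _ ↦ hJ.1 () _ _ _ _)
    (hJ.2.1.precomp Bond.index_injective) (fun _ ↦ hJ.2.2 () _ _ _ _) t

variable [IsProbabilityMeasure μ] {α : Fin S → ℝ} {N : ℕ}

lemma integral_partitionFunction (hΔnn : ∀ s p, 0 ≤ Δsq s p) (hJ : IsDisorder μ Δsq J)
    (hN : Admissible α N) :
    ∫ ω, partitionFunction N (blockSize α N) (fun _ ↦ 0) (fun s p i j ↦ J s p i j ω) ∂μ
      = Fintype.card (Conf S (blockSize α N)) * exp (N * quadForm (Dmat α Δsq) 1 1 / 2) := by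
  have hNs : ∀ s, blockSize α N s ≠ 0 := fun s ↦ (hN s).1.ne'
  simp_rw [partitionFunction_zero_eq]
  rw [integral_finsetSum _ fun σ _ ↦ hJ.integrable_exp_sum_bond _]
  simp_rw [hJ.integral_exp_sum_bond hΔnn]
  have hσ : ∀ σ : Conf S (blockSize α N), ∑ b, b.variance Δsq * bondSpin N σ b ^ 2 / 2
      = N * quadForm (Dmat α Δsq) 1 1 / 2 := fun σ ↦ by
    rw [← overlap_self hNs σ, ← sum_variance_mul_bondSpin (fun s ↦ (hN s).2) hNs, sum_div]
    simp only [sq, mul_div_assoc]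
  simp [hσ]

lemma integral_partitionFunction_sq (hΔnn : ∀ s p, 0 ≤ Δsq s p) (hJ : IsDisorder μ Δsq J)
    (hN : Admissible α N) :
    ∫ ω, partitionFunction N (blockSize α N) (fun _ ↦ 0) (fun s p i j ↦ J s p i j ω) ^ 2 ∂μ
      = exp (N * quadForm (Dmat α Δsq) 1 1) * ∑ q : Conf S (blockSize α N) × Conf S (blockSize α N),
          exp (N * quadForm (Dmat α Δsq) (overlap _ q.1 q.2) (overlap _ q.1 q.2)) := by
  have hNs : ∀ s, blockSize α N s ≠ 0 := fun s ↦ (hN s).1.ne'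
  have hV := sum_variance_mul_bondSpin (fun s ↦ (hN s).2) hNs Δsq
  have hsq : ∀ ω, partitionFunction N (blockSize α N) (fun _ ↦ 0) (fun s p i j ↦ J s p i j ω) ^ 2
      = ∑ q : Conf S (blockSize α N) × Conf S (blockSize α N),
          exp (∑ b, (bondSpin N q.1 b + bondSpin N q.2 b) * b.coupling fun s p i j ↦ J s p i j ω) :=
    fun ω ↦ by
      simp only [partitionFunction_zero_eq, sq, sum_mul_sum, Fintype.sum_prod_type, ← exp_add,
        ← sum_add_distrib, add_mul]
  simp_rw [hsq]
  rw [integral_finsetSum _ fun q _ ↦ hJ.integrable_exp_sum_bond _, mul_sum]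
  refine sum_congr rfl fun q _ ↦ ?_
  rw [hJ.integral_exp_sum_bond hΔnn, ← exp_add]
  congr 1
  have hsplit : ∀ b : Bond (blockSize α N),
      b.variance Δsq * (bondSpin N q.1 b + bondSpin N q.2 b) ^ 2 / 2
        = b.variance Δsq * (bondSpin N q.1 b * bondSpin N q.1 b) / 2
        + b.variance Δsq * (bondSpin N q.2 b * bondSpin N q.2 b) / 2
        + b.variance Δsq * (bondSpin N q.1 b * bondSpin N q.2 b) := fun b ↦ by ring
  simp only [hsplit, sum_add_distrib, ← sum_div, hV, overlap_self hNs]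
  ring

end Disorder

lemma quadForm_eq_dotProduct (M : Fin S → Fin S → ℝ) (x y : Fin S → ℝ) :
    quadForm M x y = x ⬝ᵥ (Matrix.of M *ᵥ y) := by
  simp only [quadForm, dotProduct, mulVec, of_apply, mul_sum]
  exact sum_congr rfl fun _ _ ↦ sum_congr rfl fun _ _ ↦ by ring

lemma of_Dhat (α : Fin S → ℝ) (Δsq : Fin S → Fin S → ℝ) :
    Matrix.of (Dhat α Δsq) = (Matrix.of (Dmat α Δsq))⁻¹ - diagonal fun s ↦ 2 / α s := by
  ext s p
  by_cases h : s = p <;> simp [Dhat, diagonal, h]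

lemma posDef_Dmat {α : Fin S → ℝ} {Δsq : Fin S → Fin S → ℝ} (hΔsym : ∀ s p, Δsq s p = Δsq p s)
    (hpd : PosDefQ (Dmat α Δsq)) : (Matrix.of (Dmat α Δsq)).PosDef := by
  refine .of_dotProduct_mulVec_pos ?_ fun x hx ↦ by simpa [quadForm_eq_dotProduct] using hpd x hx
  ext s p
  simp [Dmat, hΔsym s p, mul_comm]

open scoped MatrixOrder in
lemma exists_factorization_Dmat {α : Fin S → ℝ} {Δsq : Fin S → Fin S → ℝ}
    (hΔsym : ∀ s p, Δsq s p = Δsq p s) (hpd : PosDefQ (Dmat α Δsq))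
    (hhat : PosDefQ (Dhat α Δsq)) :
    ∃ B : Matrix (Fin S) (Fin S) ℝ, (∀ R, quadForm (Dmat α Δsq) R R = (B *ᵥ R) ⬝ᵥ (B *ᵥ R)) ∧
      ∃ b < 1, ∀ g, (Bᵀ *ᵥ g) ⬝ᵥ (diagonal (fun s ↦ 2 / α s) *ᵥ (Bᵀ *ᵥ g)) ≤ b * (g ⬝ᵥ g) := by
  obtain ⟨B, hB, hD⟩ := CStarAlgebra.isStrictlyPositive_iff_eq_star_mul_self.mp
    (posDef_Dmat hΔsym hpd).isStrictlyPositive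
  rw [star_eq_conjTranspose, conjTranspose_eq_transpose_of_trivial] at hD
  refine ⟨B, fun R ↦ ?_, exists_lt_one_dotProduct_transpose_mulVec_le hB hD fun x hx ↦ ?_⟩
  · rw [quadForm_eq_dotProduct, hD, ← mulVec_mulVec, mulVec_transpose, dotProduct_comm,
      ← dotProduct_mulVec]
  · have := hhat x hx
    rw [quadForm_eq_dotProduct, of_Dhat, sub_mulVec, dotProduct_sub] at this
    linarith

lemma sum_exp_overlap_dotProduct_transpose_mulVec_le {α : Fin S → ℝ} {N : ℕ}
    (hN : Admissible α N) {B : Matrix (Fin S) (Fin S) ℝ} {b : ℝ}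
    (hb : ∀ g, (Bᵀ *ᵥ g) ⬝ᵥ (diagonal (fun s ↦ 2 / α s) *ᵥ (Bᵀ *ᵥ g)) ≤ b * (g ⬝ᵥ g))
    (g : Fin S → ℝ) :
    ∑ q : Conf S (blockSize α N) × Conf S (blockSize α N),
        exp (overlap _ q.1 q.2 ⬝ᵥ (√(2 * N) • (Bᵀ *ᵥ g)))
      ≤ Fintype.card (Conf S (blockSize α N)) ^ 2 * exp (b / 2 * (g ⬝ᵥ g)) := by
  set n := blockSize α N
  have hy : ∑ s, (√(2 * N) • (Bᵀ *ᵥ g)) s ^ 2 / (2 * n s)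
      = (Bᵀ *ᵥ g) ⬝ᵥ (diagonal (fun s ↦ 2 / α s) *ᵥ (Bᵀ *ᵥ g)) / 2 := by
    rw [dotProduct, sum_div]
    refine sum_congr rfl fun s _ ↦ ?_
    have hns : (n s : ℝ) = α s * N := (hN s).2
    have hαN : α s * N ≠ 0 := hns ▸ Nat.cast_ne_zero.mpr (hN s).1.ne'
    simp only [Pi.smul_apply, smul_eq_mul, mul_pow, sq_sqrt (by positivity : (0 : ℝ) ≤ 2 * N),
      mulVec_diagonal, hns]
    field_simp [left_ne_zero_of_mul hαN, right_ne_zero_of_mul hαN]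
  calc ∑ q : Conf S n × Conf S n, exp (overlap n q.1 q.2 ⬝ᵥ (√(2 * N) • (Bᵀ *ᵥ g)))
      ≤ Fintype.card (Conf S n) ^ 2 * exp (∑ s, (√(2 * N) • (Bᵀ *ᵥ g)) s ^ 2 / (2 * n s)) :=
        sum_exp_overlap_dotProduct_le n (fun s ↦ (hN s).1.ne') _
    _ ≤ Fintype.card (Conf S n) ^ 2 * exp (b / 2 * (g ⬝ᵥ g)) := by
        gcongr
        rw [hy]
        linarith [hb g]

lemma sum_exp_mul_quadForm_overlap_le {α : Fin S → ℝ} {N : ℕ} (hN : Admissible α N)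
    {M : Fin S → Fin S → ℝ} {B : Matrix (Fin S) (Fin S) ℝ}
    (hB : ∀ R, quadForm M R R = (B *ᵥ R) ⬝ᵥ (B *ᵥ R)) {b : ℝ} (hb1 : b < 1)
    (hb : ∀ g, (Bᵀ *ᵥ g) ⬝ᵥ (diagonal (fun s ↦ 2 / α s) *ᵥ (Bᵀ *ᵥ g)) ≤ b * (g ⬝ᵥ g)) :
    ∑ q : Conf S (blockSize α N) × Conf S (blockSize α N),
        exp (N * quadForm M (overlap _ q.1 q.2) (overlap _ q.1 q.2))
      ≤ Fintype.card (Conf S (blockSize α N)) ^ 2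
          * (∫ x, exp (b / 2 * x ^ 2) ∂gaussianReal 0 1) ^ S := by
  set n := blockSize α N
  set γ := Measure.pi fun _ : Fin S ↦ gaussianReal 0 1
  have hint : ∀ R, Integrable (fun g ↦ exp (R ⬝ᵥ (√(2 * N) • (Bᵀ *ᵥ g)))) γ := fun R ↦ by
    simpa only [dotProduct_smul_transpose_mulVec] using
      integrable_exp_dotProduct_pi_gaussianReal (√(2 * N) • (B *ᵥ R))
  calc ∑ q : Conf S n × Conf S n, exp (N * quadForm M (overlap _ q.1 q.2) (overlap _ q.1 q.2))
      = ∫ g, ∑ q : Conf S n × Conf S n,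
          exp (overlap n q.1 q.2 ⬝ᵥ (√(2 * N) • (Bᵀ *ᵥ g))) ∂γ := by
        simp only [hB, exp_mul_dotProduct_self_mulVec_eq_integral B (Nat.cast_nonneg N)]
        rw [integral_finsetSum _ fun q _ ↦ hint _]
    _ ≤ ∫ g, (Fintype.card (Conf S n) : ℝ) ^ 2 * exp (b / 2 * (g ⬝ᵥ g)) ∂γ :=
        integral_mono (integrable_finsetSum _ fun q _ ↦ hint _)
          ((integrable_exp_mul_dotProduct_self_pi_gaussianReal (by linarith)).const_mul _)
          (sum_exp_overlap_dotProduct_transpose_mulVec_le hN hb)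
    _ = Fintype.card (Conf S n) ^ 2 * (∫ x, exp (b / 2 * x ^ 2) ∂gaussianReal 0 1) ^ S := by
        rw [integral_const_mul, integral_exp_mul_dotProduct_self_pi_gaussianReal, Fintype.card_fin]

theorem second_moment_bounded_general
    {S : ℕ} (α : Fin S → ℝ) (Δsq : Fin S → Fin S → ℝ)
    (hΔnn : ∀ s p, 0 ≤ Δsq s p) (hΔsym : ∀ s p, Δsq s p = Δsq p s)
    {Ω : Type} [MeasurableSpace Ω] (μ : Measure Ω) [IsProbabilityMeasure μ]
    (J : Fin S → Fin S → ℕ → ℕ → Ω → ℝ) (hJ : IsDisorder μ Δsq J)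
    (hpd : PosDefQ (Dmat α Δsq))
    (hhat : PosDefQ (Dhat α Δsq)) :
    ∃ C : ℝ, ∀ N : ℕ, Admissible α N →
      (∫ ω, (partitionFunction N (blockSize α N) (fun _ => 0)
              (fun s p i j => J s p i j ω)) ^ 2 ∂μ)
        ≤ C * (∫ ω, partitionFunction N (blockSize α N) (fun _ => 0)
              (fun s p i j => J s p i j ω) ∂μ) ^ 2 := by
  obtain ⟨B, hB, b, hb1, hb⟩ := exists_factorization_Dmat hΔsym hpd hhat
  refine ⟨(∫ x, exp (b / 2 * x ^ 2) ∂gaussianReal 0 1) ^ S, fun N hN ↦ ?_⟩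
  rw [integral_partitionFunction_sq hΔnn hJ hN, integral_partitionFunction hΔnn hJ hN, mul_pow,
    sq (exp _), ← exp_add, add_halves]
  calc _ ≤ exp (N * quadForm (Dmat α Δsq) 1 1) * (Fintype.card (Conf S (blockSize α N)) ^ 2
          * (∫ x, exp (b / 2 * x ^ 2) ∂gaussianReal 0 1) ^ S) :=
        mul_le_mul_of_nonneg_left (sum_exp_mul_quadForm_overlap_le hN hB hb1 hb) (exp_pos _).le
    _ = _ := by ring

theorem second_moment_bounded
    {S : ℕ} (hS : 0 < S) (α : Fin S → ℝ) (Δsq : Fin S → Fin S → ℝ)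
    (hαpos : ∀ s, 0 < α s) (hαsum : ∑ s, α s = 1)
    (hΔnn : ∀ s p, 0 ≤ Δsq s p) (hΔsym : ∀ s p, Δsq s p = Δsq p s)
    {Ω : Type} [MeasurableSpace Ω] (μ : Measure Ω) [IsProbabilityMeasure μ]
    (J : Fin S → Fin S → ℕ → ℕ → Ω → ℝ) (hJ : IsDisorder μ Δsq J)
    (hpd : PosDefQ (Dmat α Δsq)) (hdet : 0 < (Matrix.of (Dmat α Δsq)).det)
    (hhat : PosDefQ (Dhat α Δsq)) :
    ∃ C : ℝ, ∀ N : ℕ, Admissible α N →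
      (∫ ω, (partitionFunction N (blockSize α N) (fun _ => 0)
              (fun s p i j => J s p i j ω)) ^ 2 ∂μ)
        ≤ C * (∫ ω, partitionFunction N (blockSize α N) (fun _ => 0)
              (fun s p i j => J s p i j ω) ∂μ) ^ 2 :=
  second_moment_bounded_general α Δsq hΔnn hΔsym μ J hJ hpd hhat

end MSSK
end
end

section
/- Let γ : [0,1] → [0,1]^S be a continuous, piecewise continuously differentiable path, nondecreasing in each coordinate, with γ(0) = q_0 = 0, γ(1) = q_K = 1, and passing through every point q_l (0 ≤ l ≤ K). Then the line integral of the functional order parameter against the gradient of the quadratic form satisfies ∫₀¹ x(γ(t)) · (d/dt)(γ(t), 𝚫 γ(t)) dt = Σ_{l=0}^{K} (m_{l+1} − m_l) [ (1, 𝚫 1) − (q_l, 𝚫 q_l) ]; equivalently, −(1/2)(1, 𝚫 1) + (1/2) Σ_{l=0}^{K} (m_{l+1} − m_l)(q_l, 𝚫 q_l) = −(1/2) ∫_γ x(u) ∇_u(u, 𝚫 u) · du. -/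
/-!
Fix a level `l`. Since `γ` is continuous and monotone and passes through `q l`, the set of times
with `q l ≤ γ t` is an interval `[c, 1]` with `γ c = q l`. Hence the `l`-th Heaviside factor of
`x (γ t)` switches on exactly at `c`, and by the fundamental theorem of calculus its contribution
is `∫_c^1 d/dt (γ, 𝚫 γ) = (1, 𝚫 1) - (q l, 𝚫 q l)`. The second identity follows because the
weights `m (l + 1) - m l` telescope to `1`.
-/

open MeasureTheory ProbabilityTheory Real Filter

noncomputable section

namespace MSSK

/-- The ziggurat functional order parameter
x(u) = Σ_{l=0}^{K} (m_{l+1} − m_l) Π_s θ(u_s − q_l^{(s)}). -/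
def ziggurat {S : ℕ} (K : ℕ) (m : ℕ → ℝ) (q : ℕ → Fin S → ℝ) (u : Fin S → ℝ) : ℝ :=
  ∑ l ∈ Finset.range (K + 1),
    (m (l + 1) - m l) * ∏ s, (if q l s ≤ u s then (1 : ℝ) else 0)

open Set intervalIntegral

section Path

variable {β : Type*} [PartialOrder β] [TopologicalSpace β] [ClosedIciTopology β]

theorem MonotoneOn.exists_hitTime {γ : ℝ → β} {a b t₀ : ℝ} {q : β}
    (hc : ContinuousOn γ (Icc a b)) (hm : MonotoneOn γ (Icc a b))
    (ht₀ : t₀ ∈ Icc a b) (hq : γ t₀ = q) :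
    ∃ c ∈ Icc a b, γ c = q ∧ ∀ t ∈ Icc a b, (q ≤ γ t ↔ c ≤ t) := by
  set C := Icc a b ∩ γ ⁻¹' Ici q
  have hC : IsClosed C := hc.preimage_isClosed_of_isClosed isClosed_Icc isClosed_Ici
  have ht₀C : t₀ ∈ C := ⟨ht₀, hq.ge⟩
  have hbdd : BddBelow C := ⟨a, fun t ht => ht.1.1⟩
  obtain ⟨hcI, hcq⟩ : sInf C ∈ C := hC.csInf_mem ⟨t₀, ht₀C⟩ hbdd
  refine ⟨sInf C, hcI, le_antisymm ?_ hcq, fun t ht => ⟨fun h => csInf_le hbdd ⟨ht, h⟩,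
    fun h => le_trans hcq (hm hcI ht h)⟩⟩
  exact hq ▸ hm hcI ht₀ (csInf_le hbdd ht₀C)

end Path

section Integral

variable {g : ℝ → ℝ} {a b : ℝ}

theorem IntervalIntegrable.ite_le (hg : IntervalIntegrable g volume a b) (c : ℝ) :
    IntervalIntegrable (fun t => if c ≤ t then g t else 0) volume a b := by
  have h : (fun t => if c ≤ t then g t else 0) = (Ici c).indicator g := by
    ext t; simp only [indicator_apply, mem_Ici]
  rw [h]
  exact ⟨hg.1.indicator measurableSet_Ici, hg.2.indicator measurableSet_Ici⟩

theorem integral_ite_le {c : ℝ} (hc : c ∈ Icc a b) (hg : IntervalIntegrable g volume a b) :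
    ∫ t in a..b, (if c ≤ t then g t else 0) = ∫ t in c..b, g t := by
  have hf := IntervalIntegrable.ite_le hg c
  have hc' : c ∈ uIcc a b := Icc_subset_uIcc hc
  have hbefore : ∫ t in a..c, (if c ≤ t then g t else 0) = 0 := by
    refine (intervalIntegral.integral_congr_ae (g := fun _ => (0 : ℝ)) ?_).trans integral_zero
    filter_upwards [(countable_singleton c).ae_notMem volume] with t htc ht
    rw [uIoc_of_le hc.1] at ht
    exact if_neg (not_le.mpr (lt_of_le_of_ne ht.2 htc))
  have hafter : ∫ t in c..b, (if c ≤ t then g t else 0) = ∫ t in c..b, g t :=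
    integral_congr fun t ht => if_pos (by rw [uIcc_of_le hc.2] at ht; exact ht.1)
  rw [← integral_add_adjacent_intervals (hf.mono_set (uIcc_subset_uIcc_left hc'))
    (hf.mono_set (uIcc_subset_uIcc_right hc')), hbefore, hafter, zero_add]

end Integral

section QuadForm

variable {S : ℕ} (M : Fin S → Fin S → ℝ)

theorem continuous_quadForm_self : Continuous fun v : Fin S → ℝ => quadForm M v v := by
  unfold quadForm
  fun_prop

theorem HasDerivAt.quadForm_self {γ : ℝ → Fin S → ℝ} {γ' : Fin S → ℝ} {t : ℝ}
    (h : HasDerivAt γ γ' t) :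
    HasDerivAt (fun t => quadForm M (γ t) (γ t))
      (quadForm M γ' (γ t) + quadForm M (γ t) γ') t := by
  have hs : ∀ s, HasDerivAt (fun u => γ u s) (γ' s) t := fun s => hasDerivAt_pi.mp h s
  have : HasDerivAt (fun u => ∑ s, ∑ p, γ u s * M s p * γ u p)
      (∑ s, ∑ p, (γ' s * M s p * γ t p + γ t s * M s p * γ' p)) t :=
    HasDerivAt.fun_sum fun s _ => HasDerivAt.fun_sum fun p _ =>
      ((hs s).mul_const (M s p)).mul (hs p)
  simpa only [quadForm, ← Finset.sum_add_distrib] using this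

theorem integral_deriv_quadForm_self {γ γ' : ℝ → Fin S → ℝ} {F : Set ℝ} (hF : F.Countable)
    {a b c : ℝ} (hc : c ∈ Icc a b) (hcont : ContinuousOn γ (Icc a b))
    (hderiv : ∀ t ∈ Ioo a b \ F, HasDerivAt γ (γ' t) t)
    (hint : IntervalIntegrable (fun t => quadForm M (γ' t) (γ t) + quadForm M (γ t) (γ' t))
      volume a b) :
    ∫ t in c..b, (quadForm M (γ' t) (γ t) + quadForm M (γ t) (γ' t))
      = quadForm M (γ b) (γ b) - quadForm M (γ c) (γ c) :=
  integral_eq_of_hasDerivAt_off_countable_of_le _ _ hc.2 hF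
    ((continuous_quadForm_self M).comp_continuousOn (hcont.mono (Icc_subset_Icc_left hc.1)))
    (fun t ht => HasDerivAt.quadForm_self M (hderiv t ⟨Ioo_subset_Ioo_left hc.1 ht.1, ht.2⟩))
    (hint.mono_set (uIcc_subset_uIcc_right (Icc_subset_uIcc hc)))

end QuadForm

open Classical in
theorem ziggurat_eq_sum_ite {S : ℕ} (K : ℕ) (m : ℕ → ℝ) (q : ℕ → Fin S → ℝ) (u : Fin S → ℝ) :
    ziggurat K m q u
      = ∑ l ∈ Finset.range (K + 1), (m (l + 1) - m l) * if q l ≤ u then 1 else 0 := by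
  simp only [ziggurat, Finset.prod_boole, Finset.mem_univ, true_implies, Pi.le_def]

theorem integral_ziggurat_comp_mul {S K : ℕ} {m : ℕ → ℝ} {q : ℕ → Fin S → ℝ}
    {γ : ℝ → Fin S → ℝ} {g : ℝ → ℝ} {a b : ℝ} {c : ℕ → ℝ} (hcI : ∀ l ≤ K, c l ∈ Icc a b)
    (hc : ∀ l ≤ K, ∀ t ∈ Icc a b, (q l ≤ γ t ↔ c l ≤ t))
    (hg : IntervalIntegrable g volume a b) :
    ∫ t in a..b, ziggurat K m q (γ t) * g t
      = ∑ l ∈ Finset.range (K + 1), (m (l + 1) - m l) * ∫ t in c l..b, g t := by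
  have hab : a ≤ b := (hcI 0 K.zero_le).1.trans (hcI 0 K.zero_le).2
  calc _ = ∫ t in a..b, ∑ l ∈ Finset.range (K + 1),
          (m (l + 1) - m l) * (if c l ≤ t then g t else 0) := by
        refine integral_congr fun t ht => ?_
        rw [uIcc_of_le hab] at ht
        simp only [ziggurat_eq_sum_ite, Finset.sum_mul]
        refine Finset.sum_congr rfl fun l hl => ?_
        simp only [hc l (Finset.mem_range_succ_iff.mp hl) t ht]
        split_ifs <;> ring
    _ = _ := by
        rw [integral_finsetSum fun l _ => (IntervalIntegrable.ite_le hg _).const_mul _]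
        refine Finset.sum_congr rfl fun l hl => ?_
        rw [intervalIntegral.integral_const_mul,
          integral_ite_le (hcI l (Finset.mem_range_succ_iff.mp hl)) hg]
theorem ziggurat_line_integral_general
    {S : ℕ} (M : Fin S → Fin S → ℝ)
    (K : ℕ) (m : ℕ → ℝ) (q : ℕ → Fin S → ℝ)
    (hm0 : m 0 = 0) (hmK : m (K + 1) = 1)
    (hqK : ∀ s, q K s = 1)
    (γ γ' : ℝ → Fin S → ℝ) (F : Finset ℝ)
    (hcont : ContinuousOn γ (Set.Icc 0 1))
    (hderiv : ∀ t ∈ Set.Ioo (0 : ℝ) 1 \ (F : Set ℝ), HasDerivAt γ (γ' t) t)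
    (hγmono : ∀ s, MonotoneOn (fun t => γ t s) (Set.Icc 0 1))
    (hend : γ 1 = q K)
    (hpass : ∀ l ≤ K, ∃ t ∈ Set.Icc (0 : ℝ) 1, γ t = q l)
    (hint : IntervalIntegrable
      (fun t => quadForm M (γ' t) (γ t) + quadForm M (γ t) (γ' t))
      MeasureTheory.volume 0 1) :
    (∫ t in (0 : ℝ)..1,
        ziggurat K m q (γ t) * (quadForm M (γ' t) (γ t) + quadForm M (γ t) (γ' t)))
      = ∑ l ∈ Finset.range (K + 1), (m (l + 1) - m l) *
          (quadForm M (fun _ => 1) (fun _ => 1) - quadForm M (q l) (q l)) ∧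
    -(1 / 2) * quadForm M (fun _ => 1) (fun _ => 1)
      + (1 / 2) * ∑ l ∈ Finset.range (K + 1), (m (l + 1) - m l) * quadForm M (q l) (q l)
      = -(1 / 2) * ∫ t in (0 : ℝ)..1,
          ziggurat K m q (γ t) * (quadForm M (γ' t) (γ t) + quadForm M (γ t) (γ' t)) := by
  have hγm : MonotoneOn γ (Icc 0 1) := fun a ha b hb hab s => hγmono s ha hb hab
  have hhit : ∀ l ≤ K, ∃ c ∈ Icc (0 : ℝ) 1, γ c = q l ∧ ∀ t ∈ Icc (0 : ℝ) 1, (q l ≤ γ t ↔ c ≤ t) :=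
    fun l hl => let ⟨_, ht, hγt⟩ := hpass l hl; MonotoneOn.exists_hitTime hcont hγm ht hγt
  choose! c hcI hγc hc using hhit
  have hγ1 : γ 1 = fun _ => 1 := hend.trans (funext hqK)
  have hfirst : ∫ t in (0 : ℝ)..1,
        ziggurat K m q (γ t) * (quadForm M (γ' t) (γ t) + quadForm M (γ t) (γ' t))
      = ∑ l ∈ Finset.range (K + 1), (m (l + 1) - m l) *
          (quadForm M (fun _ => 1) (fun _ => 1) - quadForm M (q l) (q l)) := by
    rw [integral_ziggurat_comp_mul hcI hc hint]
    refine Finset.sum_congr rfl fun l hl => ?_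
    have hlK := Finset.mem_range_succ_iff.mp hl
    rw [integral_deriv_quadForm_self M F.countable_toSet (hcI l hlK) hcont hderiv hint, hγ1,
      hγc l hlK]
  have hweights : ∑ l ∈ Finset.range (K + 1), (m (l + 1) - m l) = 1 := by
    rw [Finset.sum_range_sub, hmK, hm0, sub_zero]
  refine ⟨hfirst, ?_⟩
  rw [hfirst]
  simp only [mul_sub, Finset.sum_sub_distrib, ← Finset.sum_mul, hweights]
  ring

theorem ziggurat_line_integral
    {S : ℕ} (hS : 0 < S) (M : Fin S → Fin S → ℝ)
    (hMsym : ∀ s p, M s p = M p s) (hMpsd : PosSemidefQ M)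
    (K : ℕ) (hK : 1 ≤ K) (m : ℕ → ℝ) (q : ℕ → Fin S → ℝ)
    (hm0 : m 0 = 0) (hmK : m (K + 1) = 1) (hmono : ∀ l ≤ K, m l ≤ m (l + 1))
    (hq0 : ∀ s, q 0 s = 0) (hqK : ∀ s, q K s = 1)
    (hqmono : ∀ l < K, ∀ s, q l s ≤ q (l + 1) s)
    (γ γ' : ℝ → Fin S → ℝ) (F : Finset ℝ)
    (hcont : ContinuousOn γ (Set.Icc 0 1))
    (hderiv : ∀ t ∈ Set.Ioo (0 : ℝ) 1 \ (F : Set ℝ), HasDerivAt γ (γ' t) t)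
    (hγmono : ∀ s, MonotoneOn (fun t => γ t s) (Set.Icc 0 1))
    (hstart : γ 0 = q 0) (hend : γ 1 = q K)
    (hpass : ∀ l ≤ K, ∃ t ∈ Set.Icc (0 : ℝ) 1, γ t = q l)
    (hint : IntervalIntegrable
      (fun t => quadForm M (γ' t) (γ t) + quadForm M (γ t) (γ' t))
      MeasureTheory.volume 0 1) :
    (∫ t in (0 : ℝ)..1,
        ziggurat K m q (γ t) * (quadForm M (γ' t) (γ t) + quadForm M (γ t) (γ' t)))
      = ∑ l ∈ Finset.range (K + 1), (m (l + 1) - m l) *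
          (quadForm M (fun _ => 1) (fun _ => 1) - quadForm M (q l) (q l)) ∧
    -(1 / 2) * quadForm M (fun _ => 1) (fun _ => 1)
      + (1 / 2) * ∑ l ∈ Finset.range (K + 1), (m (l + 1) - m l) * quadForm M (q l) (q l)
      = -(1 / 2) * ∫ t in (0 : ℝ)..1,
          ziggurat K m q (γ t) * (quadForm M (γ' t) (γ t) + quadForm M (γ t) (γ' t)) :=
  ziggurat_line_integral_general M K m q hm0 hmK hqK γ γ' F hcont hderiv hγmono hend hpass hint

end MSSK
end
end
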